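/- Let H be a Hopf algebra and B an algebra. If α : B ⊗ H → B ⊗ H is a left B-module automorphism satisfying (α ⊗ id)∘(id ⊗ Δ) = (id ⊗ Δ)∘α and α(a ⊗ 1) = a ⊗ 1 for all a ∈ B, then the linear map τ : H → B defined by τ(h) = (id ⊗ ε)(α(1 ⊗ h)) satisfies α(a ⊗ h) = Σ a·τ(h₁) ⊗ h₂ for all a ∈ B, h ∈ H, and τ(1) = 1. -/
import Mathlib


open TensorProduct

set_option synthInstance.maxHeartbeats 1000000
set_option maxHeartbeats 1000000

variable {k : Type*} [Field k]
variable {H : Type*} [Ring H] [HopfAlgebra k H]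
variable {B : Type*} [Ring B] [Algebra k B]

/-- The left gauge transformation on `B ⊗ H` associated to `τ : H → B`:
`a ⊗ h ↦ Σ a·τ(h₁) ⊗ h₂`. -/
noncomputable def gaugeMap (τ : H →ₗ[k] B) : B ⊗[k] H →ₗ[k] B ⊗[k] H :=
  (TensorProduct.map (LinearMap.mul' k B) LinearMap.id) ∘ₗ
    (TensorProduct.assoc k B B H).symm.toLinearMap ∘ₗ
    (TensorProduct.map LinearMap.id
      ((TensorProduct.map τ LinearMap.id) ∘ₗ (Coalgebra.comul : H →ₗ[k] H ⊗[k] H)))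

/-- `τ_α(h) = (id ⊗ ε)(α(1 ⊗ h))`. -/
noncomputable def tauOf (α : B ⊗[k] H →ₗ[k] B ⊗[k] H) : H →ₗ[k] B :=
  (TensorProduct.rid k B).toLinearMap ∘ₗ
    (TensorProduct.map LinearMap.id (Coalgebra.counit : H →ₗ[k] k)) ∘ₗ
    α ∘ₗ (TensorProduct.mk k B H 1)

theorem statement_1 (α : B ⊗[k] H →ₗ[k] B ⊗[k] H)
    (hbij : Function.Bijective α)
    (hmod : ∀ (a : B) (z : B ⊗[k] H), α (a • z) = a • α z)
    (hcomul : (TensorProduct.map α LinearMap.id) ∘ₗ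
        (TensorProduct.assoc k B H H).symm.toLinearMap ∘ₗ
        (TensorProduct.map LinearMap.id (Coalgebra.comul : H →ₗ[k] H ⊗[k] H))
      = (TensorProduct.assoc k B H H).symm.toLinearMap ∘ₗ
        (TensorProduct.map LinearMap.id (Coalgebra.comul : H →ₗ[k] H ⊗[k] H)) ∘ₗ α)
    (hone : ∀ a : B, α (a ⊗ₜ[k] (1 : H)) = a ⊗ₜ[k] (1 : H)) :
    α = gaugeMap (tauOf α) ∧ tauOf α 1 = 1 := by
  set M : (B ⊗[k] H) ⊗[k] H →ₗ[k] B ⊗[k] H :=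
    TensorProduct.map ((TensorProduct.rid k B).toLinearMap ∘ₗ
      TensorProduct.map LinearMap.id (Coalgebra.counit : H →ₗ[k] k)) LinearMap.id with hM
  have L0 : ∀ (b : B) (y : H ⊗[k] H),
      M ((TensorProduct.assoc k B H H).symm (b ⊗ₜ y)) =
      TensorProduct.mk k B H b ((TensorProduct.lid k H)
        (LinearMap.rTensor H (Coalgebra.counit : H →ₗ[k] k) y)) := by
    intro b y
    induction y using TensorProduct.induction_on with
    | zero => simp only [TensorProduct.tmul_zero, map_zero]
    | tmul x z => simp [hM, TensorProduct.smul_tmul']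
    | add u v hu hv => simp only [TensorProduct.tmul_add, map_add, hu, hv]
  have L1 : ∀ z : B ⊗[k] H,
      M ((TensorProduct.assoc k B H H).symm
        (TensorProduct.map LinearMap.id (Coalgebra.comul : H →ₗ[k] H ⊗[k] H) z)) = z := by
    intro z
    induction z using TensorProduct.induction_on with
    | zero => simp only [map_zero]
    | tmul b g =>
        simp only [TensorProduct.map_tmul, LinearMap.id_coe, id_eq]
        rw [L0, Coalgebra.rTensor_counit_comul]
        simp
    | add u v hu hv => simp only [map_add, hu, hv]
  have L2 : ∀ y : H ⊗[k] H,
      M ((TensorProduct.map α LinearMap.id)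
        ((TensorProduct.assoc k B H H).symm ((1 : B) ⊗ₜ y))) =
      TensorProduct.map (tauOf α) LinearMap.id y := by
    intro y
    induction y using TensorProduct.induction_on with
    | zero => simp only [TensorProduct.tmul_zero, map_zero]
    | tmul x z => simp [hM, tauOf]
    | add u v hu hv => simp only [TensorProduct.tmul_add, map_add, hu, hv]
  have key : ∀ h : H, α (1 ⊗ₜ[k] h) =
      TensorProduct.map (tauOf α) LinearMap.id (Coalgebra.comul h) := by
    intro h
    have E := LinearMap.congr_fun hcomul ((1 : B) ⊗ₜ[k] h)
    simp only [LinearMap.comp_apply, LinearEquiv.coe_coe, TensorProduct.map_tmul,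
      LinearMap.id_coe, id_eq] at E
    have E2 := congrArg M E
    rw [L1, L2] at E2
    exact E2.symm
  have L3 : ∀ (a : B) (y : B ⊗[k] H),
      (TensorProduct.map (LinearMap.mul' k B) LinearMap.id)
        ((TensorProduct.assoc k B B H).symm (a ⊗ₜ y)) = a • y := by
    intro a y
    induction y using TensorProduct.induction_on with
    | zero => simp only [TensorProduct.tmul_zero, map_zero, smul_zero]
    | tmul c g => simp [TensorProduct.smul_tmul', smul_eq_mul]
    | add u v hu hv => simp only [TensorProduct.tmul_add, map_add, hu, hv, smul_add]
  constructor
  · apply TensorProduct.ext'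
    intro a h
    have h1 : a ⊗ₜ[k] h = a • ((1 : B) ⊗ₜ[k] h) := by
      simp [TensorProduct.smul_tmul']
    have hL : α (a ⊗ₜ[k] h) =
        a • TensorProduct.map (tauOf α) LinearMap.id (Coalgebra.comul h) := by
      rw [h1, hmod, key]
    rw [hL, gaugeMap]
    simp only [LinearMap.comp_apply, LinearEquiv.coe_coe, TensorProduct.map_tmul,
      LinearMap.id_coe, id_eq]
    rw [L3]
  · simp [tauOf, hone 1]
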